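/- arXiv:2410.18761 — 2 statements merged into one kernel-verified Lean document; each statement's English description precedes it below -/
import Mathlib

section
/- Let Φ be a reduced irreducible root system in ℝ^d with d ≥ 2. Then every type-2 decomposition of Φ into subsets Φ_1, …, Φ_{s+t} satisfies Σ_{l=1}^{s+t} rank Φ_l ≥ d + 1, where rank Φ_l := dim_ℝ span_ℝ Φ_l. -/
noncomputable section

/-- The standard inner product on `ℝ^d`. -/
def dotR {d : ℕ} (x y : Fin d → ℝ) : ℝ := ∑ i, x i * y i

/-- `Φ` is a root system in `ℝ^d`: a finite set of nonzero vectors spanning `ℝ^d`,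
closed under the reflections `s_α`, with integral Cartan numbers. -/
def IsRootSystem {d : ℕ} (Φ : Finset (Fin d → ℝ)) : Prop :=
  (∀ α ∈ Φ, α ≠ 0) ∧
  Submodule.span ℝ (Φ : Set (Fin d → ℝ)) = ⊤ ∧
  (∀ α ∈ Φ, ∀ β ∈ Φ, β - (2 * dotR β α / dotR α α) • α ∈ Φ) ∧
  (∀ α ∈ Φ, ∀ β ∈ Φ, ∃ n : ℤ, 2 * dotR β α / dotR α α = (n : ℝ))

/-- `Φ` is reduced: the only multiples of a root `α` in `Φ` are `±α`. -/
def IsReducedRS {d : ℕ} (Φ : Finset (Fin d → ℝ)) : Prop :=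
  ∀ α ∈ Φ, ∀ t : ℝ, t • α ∈ Φ → t = 1 ∨ t = -1

/-- `Φ` is irreducible: it is not the disjoint union of two nonempty mutually
orthogonal subsets. -/
def IsIrreducibleRS {d : ℕ} (Φ : Finset (Fin d → ℝ)) : Prop :=
  ∀ A B : Set (Fin d → ℝ), (Φ : Set (Fin d → ℝ)) = A ∪ B → Disjoint A B →
    (∀ a ∈ A, ∀ b ∈ B, dotR a b = 0) → A = ∅ ∨ B = ∅

lemma dotR_comm {d : ℕ} (x y : Fin d → ℝ) : dotR x y = dotR y x := by
  unfold dotR; exact Finset.sum_congr rfl fun i _ => mul_comm _ _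

lemma dotR_self_ne_zero {d : ℕ} {x : Fin d → ℝ} (hx : x ≠ 0) : dotR x x ≠ 0 := by
  intro h
  apply hx
  funext i
  have h0 : ∀ i ∈ Finset.univ, (0:ℝ) ≤ x i * x i := fun i _ => mul_self_nonneg _
  have := (Finset.sum_eq_zero_iff_of_nonneg h0).mp h i (Finset.mem_univ i)
  exact mul_self_eq_zero.mp this

lemma finrank_finset_sup_le {d : ℕ} {ι : Type*} [DecidableEq ι]
    (V : ι → Submodule ℝ (Fin d → ℝ)) (s : Finset ι) :
    Module.finrank ℝ ↥(s.sup V) ≤ ∑ i ∈ s, Module.finrank ℝ (V i) := by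
  induction s using Finset.induction_on with
  | empty => simp
  | insert a s hns ih =>
    rw [Finset.sup_insert, Finset.sum_insert hns]
    exact le_trans (Submodule.finrank_add_le_finrank_add_finrank _ _)
      (by omega)

/-- For a reduced irreducible root system of rank `d ≥ 2`, every type-2
decomposition `Φ = Φ_1 ∪ ⋯ ∪ Φ_{s+t}` satisfies `Σ rank Φ_l ≥ d + 1`. -/
theorem stmt6 {d : ℕ} (hd : 2 ≤ d) (Φ : Finset (Fin d → ℝ))
    (hRS : IsRootSystem Φ) (hred : IsReducedRS Φ) (hirr : IsIrreducibleRS Φ)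
    (s t : ℕ) (hst : 2 ≤ s + t) (P : Fin (s + t) → Set (Fin d → ℝ))
    (hne : ∀ l, (P l).Nonempty)
    (hproper : ∀ l, P l ⊂ (Φ : Set (Fin d → ℝ)))
    (hunion : (⋃ l, P l) = (Φ : Set (Fin d → ℝ)))
    (hspan : ∀ l, (Φ : Set (Fin d → ℝ)) ∩ ↑(Submodule.span ℝ (P l)) = P l)
    (hdisjT : ∀ j j' : Fin (s + t), s ≤ j.val → s ≤ j'.val → j ≠ j' → Disjoint (P j) (P j'))
    (hdisjST : ∀ k j : Fin (s + t), k.val < s → s ≤ j.val → Disjoint (P k) (P j)) :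
    d + 1 ≤ ∑ l, Module.finrank ℝ ↥(Submodule.span ℝ (P l)) := by
  classical
  set V : Fin (s + t) → Submodule ℝ (Fin d → ℝ) := fun l => Submodule.span ℝ (P l) with hV
  have hPsub : ∀ l, P l ⊆ (Φ : Set (Fin d → ℝ)) := fun l => (hproper l).subset
  have hPV : ∀ l, P l ⊆ (V l : Set (Fin d → ℝ)) := fun l => Submodule.subset_span
  -- the spans fill the whole space
  have hsupV : Finset.univ.sup V = ⊤ := by
    rw [Finset.sup_univ_eq_iSup, ← Submodule.span_iUnion, hunion, hRS.2.1]
  have hdtop : Module.finrank ℝ (⊤ : Submodule ℝ (Fin d → ℝ)) = d := by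
    rw [finrank_top]; simp [Module.finrank_pi]
  -- the sum of ranks is at least d
  have hged : d ≤ ∑ l, Module.finrank ℝ (V l) := by
    have := finrank_finset_sup_le V Finset.univ
    rw [hsupV, hdtop] at this
    exact this
  by_contra hcon
  push_neg at hcon
  have hcon' : ∑ l, Module.finrank ℝ (V l) < d + 1 := hcon
  have hsum : ∑ l, Module.finrank ℝ (V l) = d := by omega
  -- each span is disjoint from the sup of the others
  have hindep : ∀ m : Fin (s + t), Disjoint (V m) ((Finset.univ.erase m).sup V) := by
    intro m
    set S := (Finset.univ.erase m).sup V with hS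
    have hsupm : V m ⊔ S = ⊤ := by
      rw [hS, ← Finset.sup_insert, Finset.insert_erase (Finset.mem_univ m), hsupV]
    have hSle : Module.finrank ℝ S ≤ ∑ i ∈ Finset.univ.erase m, Module.finrank ℝ (V i) :=
      finrank_finset_sup_le V _
    have hkey := Submodule.finrank_sup_add_finrank_inf_eq (V m) S
    rw [hsupm, hdtop] at hkey
    have hsum' : Module.finrank ℝ ↥(V m) + ∑ i ∈ Finset.univ.erase m, Module.finrank ℝ ↥(V i)
        = ∑ i, Module.finrank ℝ ↥(V i) := by
      simpa using Finset.add_sum_erase Finset.univ (fun i => Module.finrank ℝ ↥(V i))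
        (Finset.mem_univ m)
    have hzero : Module.finrank ℝ ↥(V m ⊓ S) = 0 := by omega
    rw [disjoint_iff]
    exact Submodule.finrank_eq_zero.mp hzero
  have hpair : ∀ i j : Fin (s + t), i ≠ j → V i ⊓ V j = ⊥ := by
    intro i j hij
    have hle : V j ≤ (Finset.univ.erase i).sup V :=
      Finset.le_sup (Finset.mem_erase.mpr ⟨hij.symm, Finset.mem_univ j⟩)
    exact le_bot_iff.mp (le_trans (inf_le_inf_left _ hle) (disjoint_iff.mp (hindep i)).le)
  -- orthogonality between different parts
  have horth : ∀ i j : Fin (s + t), i ≠ j → ∀ α ∈ P i, ∀ β ∈ P j, dotR β α = 0 := by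
    intro i j hij α hα β hβ
    have hαΦ : α ∈ Φ := hPsub i hα
    have hβΦ : β ∈ Φ := hPsub j hβ
    have hα0 : α ≠ 0 := hRS.1 α hαΦ
    have hβ0 : β ≠ 0 := hRS.1 β hβΦ
    set c : ℝ := 2 * dotR β α / dotR α α with hc
    have hγΦ : β - c • α ∈ Φ := hRS.2.2.1 α hαΦ β hβΦ
    have hγU : β - c • α ∈ ⋃ l, P l := hunion ▸ hγΦ
    obtain ⟨m, hm⟩ := Set.mem_iUnion.mp hγU
    have hαVi : α ∈ V i := hPV i hα
    have hβVj : β ∈ V j := hPV j hβ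
    have hγVm : β - c • α ∈ V m := hPV m hm
    have hczero : c = 0 := by
      by_cases hmj : m = j
      · -- c • α ∈ V i ⊓ V j
        subst hmj
        have h1 : c • α ∈ V m := by
          have := Submodule.sub_mem (V m) hβVj hγVm
          simpa using this
        have h2 : c • α ∈ V i := Submodule.smul_mem _ _ hαVi
        have : c • α ∈ V i ⊓ V m := ⟨h2, h1⟩
        rw [hpair i m hij] at this
        rcases smul_eq_zero.mp (Submodule.mem_bot ℝ |>.mp this) with h | h
        · exact h
        · exact absurd h hα0
      · exfalso
        by_cases hmi : m = i
        · -- β ∈ V i ⊓ V j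
          subst hmi
          have h1 : β ∈ V m := by
            have := Submodule.add_mem (V m) hγVm (Submodule.smul_mem _ c hαVi)
            simpa using this
          have : β ∈ V m ⊓ V j := ⟨h1, hβVj⟩
          rw [hpair m j (by simpa using hij)] at this
          exact hβ0 (Submodule.mem_bot ℝ |>.mp this)
        · -- γ ∈ V m ⊓ (sup of others) = ⊥, then β = c • α ∈ V i ⊓ V j
          have hγS : β - c • α ∈ (Finset.univ.erase m).sup V := by
            have hiS : V i ≤ (Finset.univ.erase m).sup V :=
              Finset.le_sup (Finset.mem_erase.mpr ⟨fun h => hmi h.symm, Finset.mem_univ i⟩)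
            have hjS : V j ≤ (Finset.univ.erase m).sup V :=
              Finset.le_sup (Finset.mem_erase.mpr ⟨fun h => hmj h.symm, Finset.mem_univ j⟩)
            exact Submodule.sub_mem _ (hjS hβVj) (hiS (Submodule.smul_mem _ c hαVi))
          have hγ0 : β - c • α = 0 := by
            have : β - c • α ∈ V m ⊓ (Finset.univ.erase m).sup V := ⟨hγVm, hγS⟩
            rw [disjoint_iff.mp (hindep m)] at this
            exact Submodule.mem_bot ℝ |>.mp this
          have hβeq : β = c • α := by
            have := sub_eq_zero.mp hγ0
            exact this
          have : β ∈ V i ⊓ V j := ⟨hβeq ▸ Submodule.smul_mem _ c hαVi, hβVj⟩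
          rw [hpair i j hij] at this
          exact hβ0 (Submodule.mem_bot ℝ |>.mp this)
    -- c = 0 implies dotR β α = 0
    have hαα : dotR α α ≠ 0 := dotR_self_ne_zero hα0
    have : 2 * dotR β α = 0 := by
      have := hc ▸ hczero
      field_simp at this
      linarith [this]
    linarith
  -- contradict irreducibility
  have h0 : (0 : ℕ) < s + t := by omega
  let i0 : Fin (s + t) := ⟨0, h0⟩
  let i1 : Fin (s + t) := ⟨1, by omega⟩
  have hi01 : i0 ≠ i1 := by
    intro h
    have := congrArg Fin.val h
    simp [i0, i1] at this
  set A : Set (Fin d → ℝ) := P i0 with hA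
  set B : Set (Fin d → ℝ) := ⋃ l ∈ ({i0}ᶜ : Set (Fin (s+t))), P l with hB
  have hABunion : (Φ : Set (Fin d → ℝ)) = A ∪ B := by
    ext x
    constructor
    · intro hx
      obtain ⟨l, hl⟩ := Set.mem_iUnion.mp (hunion ▸ hx : x ∈ ⋃ l, P l)
      by_cases h : l = i0
      · subst h; exact Or.inl hl
      · exact Or.inr (Set.mem_biUnion h hl)
    · intro hx
      rcases hx with hx | hx
      · exact hPsub i0 hx
      · obtain ⟨l, _, hl⟩ := Set.mem_iUnion₂.mp hx
        exact hPsub l hl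
  have hABdisj : Disjoint A B := by
    rw [Set.disjoint_left]
    intro x hxA hxB
    obtain ⟨l, hl0, hl⟩ := Set.mem_iUnion₂.mp hxB
    have hx0 : x ≠ 0 := hRS.1 x (hPsub i0 hxA)
    have : x ∈ V i0 ⊓ V l := ⟨hPV i0 hxA, hPV l hl⟩
    rw [hpair i0 l (fun h => hl0 h.symm)] at this
    exact hx0 (Submodule.mem_bot ℝ |>.mp this)
  have hABorth : ∀ a ∈ A, ∀ b ∈ B, dotR a b = 0 := by
    intro a ha b hb
    obtain ⟨l, hl0, hl⟩ := Set.mem_iUnion₂.mp hb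
    exact horth l i0 (fun h => hl0 (Set.mem_singleton_iff.mpr h)) b hl a ha
  rcases hirr A B hABunion hABdisj hABorth with h | h
  · exact absurd h (Set.nonempty_iff_ne_empty.mp (hne i0))
  · have : (P i1).Nonempty := hne i1
    obtain ⟨x, hx⟩ := this
    have : x ∈ B := Set.mem_biUnion (fun hh : i1 ∈ ({i0} : Set _) => hi01 hh.symm) hx
    rw [h] at this
    exact this
end
end

section
/- Let Φ be a reduced irreducible root system in ℝ^d with d ≥ 2, and let u, v, w ∈ ℂ^d be linearly independent over ℂ with (θ_ℂ(u), θ_ℂ(v), θ_ℂ(w)) ≠ (0,0,0) for every θ ∈ Φ. Then there exists θ ∈ Φ with θ_ℂ(v)² − 4·θ_ℂ(u)·θ_ℂ(w) ≠ 0; equivalently, not every binary quadratic q_θ has a double root, i.e., the set Z contains at least one transversal point. -/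
/-
If every discriminant vanished, the coefficient vectors `T θ = (θ(u), θ(v), θ(w)) ∈ ℂ³` of the
forms `q_θ` would all be isotropic for the nondegenerate ternary quadratic form
`disc (a, b, c) = b² - 4ac`. As `T` is linear in `θ`, evaluating `disc` at the reflection
`b - c a` (with `c ≠ 0`) of two non-orthogonal roots shows that `T a` and `T b` are also orthogonal
for the polar form, hence proportional. By irreducibility every `T θ` is then a multiple of one
vector `T α`, and a nonzero `n ⊥ T α` gives `z = n₀u + n₁v + n₂w` with `θ_ℂ(z) = 0` for all roots.
The roots span `ℝ^d`, so `z = 0`, contradicting the linear independence of `u, v, w`.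
-/

noncomputable section

/-- The complexification `θ_ℂ : ℂ^d → ℂ` of the linear functional `z ↦ Σ θᵢ zᵢ`. -/
def thetaC {d : ℕ} (θ : Fin d → ℝ) (z : Fin d → ℂ) : ℂ := ∑ i, (θ i : ℂ) * z i

/-- The zero set `Z(q_θ) ⊆ ℙ¹(ℂ)` of the binary quadratic
`q_θ(z₁,z₂) = θ_ℂ(u)z₁² + θ_ℂ(v)z₁z₂ + θ_ℂ(w)z₂²`. The condition is invariant under
rescaling a representative, so it is well defined on `ℙ¹(ℂ)`. -/
def qZero {d : ℕ} (u v w : Fin d → ℂ) (θ : Fin d → ℝ) :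
    Set (Projectivization ℂ (Fin 2 → ℂ)) :=
  {p | thetaC θ u * p.rep 0 ^ 2 + thetaC θ v * (p.rep 0 * p.rep 1)
        + thetaC θ w * p.rep 1 ^ 2 = 0}

/-- The discriminant `disc(q_θ) = θ_ℂ(v)² − 4·θ_ℂ(u)·θ_ℂ(w)`. -/
def discQ {d : ℕ} (u v w : Fin d → ℂ) (θ : Fin d → ℝ) : ℂ :=
  thetaC θ v ^ 2 - 4 * thetaC θ u * thetaC θ w

open Matrix

section QuadDisc

variable {K : Type*}

/-- The discriminant `b² - 4ac` of the binary quadratic form with coefficient vector `(a, b, c)`. -/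
def quadDisc [CommRing K] (t : Fin 3 → K) : K := t 1 ^ 2 - 4 * t 0 * t 2

def quadDiscPolar [CommRing K] (e f : Fin 3 → K) : K := e 1 * f 1 - 2 * (e 0 * f 2 + e 2 * f 0)

lemma quadDisc_sub_smul [CommRing K] (e f : Fin 3 → K) (c : K) :
    quadDisc (f - c • e) = quadDisc f - 2 * c * quadDiscPolar e f + c ^ 2 * quadDisc e := by
  simp only [quadDisc, quadDiscPolar, Pi.sub_apply, Pi.smul_apply, smul_eq_mul]
  ring

variable [Field K] [NeZero (2 : K)]

lemma cross_eq_zero_of_quadDisc_eq_zero {e f : Fin 3 → K} (he : quadDisc e = 0)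
    (hf : quadDisc f = 0) (hef : quadDiscPolar e f = 0) : e ⨯₃ f = 0 := by
  simp only [quadDisc, quadDiscPolar] at he hf hef
  have h12 : (e 1 * f 2 - e 2 * f 1) ^ 2 = 0 := by
    linear_combination f 2 ^ 2 * he - 2 * e 2 * f 2 * hef + e 2 ^ 2 * hf
  have h20 : (2 * (e 2 * f 0 - e 0 * f 2)) ^ 2 = 0 := by
    linear_combination -(e 1 * f 1 + 2 * (e 0 * f 2 + e 2 * f 0)) * hef + f 1 ^ 2 * he
      + 4 * e 0 * e 2 * hf
  have h01 : (e 0 * f 1 - e 1 * f 0) ^ 2 = 0 := by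
    linear_combination f 0 ^ 2 * he - 2 * e 0 * f 0 * hef + e 0 ^ 2 * hf
  rw [cross_apply]
  simp only [pow_eq_zero_iff two_ne_zero, mul_eq_zero, two_ne_zero, false_or] at h12 h20 h01
  simp [h12, h20, h01]

/-- A nondegenerate ternary quadratic form has no totally isotropic plane. -/
lemma exists_eq_smul_of_quadDisc_eq_zero {e f : Fin 3 → K} (he0 : e ≠ 0) (he : quadDisc e = 0)
    (hf : quadDisc f = 0) (hef : quadDiscPolar e f = 0) : ∃ l : K, f = l • e := by
  have hdep : ¬ LinearIndependent K ![e, f] := by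
    rw [← crossProduct_ne_zero_iff_linearIndependent, not_not]
    exact cross_eq_zero_of_quadDisc_eq_zero he hf hef
  rw [LinearIndependent.pair_iff' he0] at hdep
  obtain ⟨l, hl⟩ := not_forall_not.mp hdep
  exact ⟨l, hl.symm⟩

end QuadDisc

section RootSystem

variable {d : ℕ} {Φ : Finset (Fin d → ℝ)}

lemma IsRootSystem.exists_sub_smul_mem (hRS : IsRootSystem Φ) {a b : Fin d → ℝ} (ha : a ∈ Φ)
    (hb : b ∈ Φ) (hab : dotR a b ≠ 0) : ∃ c : ℝ, c ≠ 0 ∧ b - c • a ∈ Φ := by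
  have hba : b ⬝ᵥ a ≠ 0 := by rwa [dotProduct_comm]
  have haa : a ⬝ᵥ a ≠ 0 := by
    rw [Ne, dotProduct_self_eq_zero]
    rintro rfl
    simp [dotR] at hab
  exact ⟨_, div_ne_zero (mul_ne_zero two_ne_zero hba) haa, hRS.2.2.1 a ha b hb⟩

lemma IsIrreducibleRS.induction_on (hirr : IsIrreducibleRS Φ) {P : (Fin d → ℝ) → Prop}
    {α : Fin d → ℝ} (hα : α ∈ Φ) (hPα : P α)
    (step : ∀ a ∈ Φ, ∀ b ∈ Φ, P a → dotR a b ≠ 0 → P b) : ∀ θ ∈ Φ, P θ := by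
  have hcover : (Φ : Set (Fin d → ℝ)) = {x | x ∈ Φ ∧ P x} ∪ {x | x ∈ Φ ∧ ¬ P x} := by
    ext x
    simp only [Finset.mem_coe, Set.mem_union, Set.mem_ofPred_eq]
    tauto
  have hdisj : Disjoint {x | x ∈ Φ ∧ P x} {x | x ∈ Φ ∧ ¬ P x} :=
    Set.disjoint_left.mpr fun _ hx hx' => hx'.2 hx.2
  have horth : ∀ a ∈ {x | x ∈ Φ ∧ P x}, ∀ b ∈ {x | x ∈ Φ ∧ ¬ P x}, dotR a b = 0 :=
    fun a ⟨ha, hPa⟩ b ⟨hb, hPb⟩ => by_contra fun hab => hPb (step a ha b hb hPa hab)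
  rcases hirr _ _ hcover hdisj horth with hA | hB
  · exact (Set.eq_empty_iff_forall_notMem.mp hA α ⟨hα, hPα⟩).elim
  · exact fun θ hθ => by_contra fun hPθ => Set.eq_empty_iff_forall_notMem.mp hB θ ⟨hθ, hPθ⟩

end RootSystem

section ThetaC

variable {d : ℕ}

lemma thetaC_eq_linearCombination (θ : Fin d → ℝ) (z : Fin d → ℂ) :
    thetaC θ z = Fintype.linearCombination ℝ z θ := by
  simp [thetaC, Fintype.linearCombination_apply, Complex.real_smul]

lemma eq_zero_of_forall_thetaC_eq_zero {s : Set (Fin d → ℝ)} (hs : Submodule.span ℝ s = ⊤)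
    {z : Fin d → ℂ} (hz : ∀ θ ∈ s, thetaC θ z = 0) : z = 0 := by
  have hzero : Fintype.linearCombination ℝ z = 0 :=
    LinearMap.ext_on hs fun θ hθ => by simpa [thetaC_eq_linearCombination] using hz θ hθ
  ext j
  simpa using LinearMap.congr_fun hzero (Pi.single j 1)

/-- For `x = ![u, v, w]` this is the coefficient vector of `q_θ`. -/
def thetaCoeffs {ι : Type*} (x : ι → Fin d → ℂ) (θ : Fin d → ℝ) : ι → ℂ := fun i => thetaC θ (x i)

lemma thetaCoeffs_sub_smul {ι : Type*} (x : ι → Fin d → ℂ) (a b : Fin d → ℝ) (c : ℝ) :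
    thetaCoeffs x (b - c • a) = thetaCoeffs x b - (c : ℂ) • thetaCoeffs x a := by
  ext i
  simp [thetaCoeffs, thetaC_eq_linearCombination, Complex.real_smul]

lemma thetaC_sum_smul {ι : Type*} [Fintype ι] (x : ι → Fin d → ℂ) (n : ι → ℂ) (θ : Fin d → ℝ) :
    thetaC θ (∑ i, n i • x i) = n ⬝ᵥ thetaCoeffs x θ := by
  simp [thetaC, thetaCoeffs, dotProduct, Finset.mul_sum, Finset.sum_comm (γ := ι), mul_left_comm]

lemma discQ_eq_quadDisc (u v w : Fin d → ℂ) (θ : Fin d → ℝ) :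
    discQ u v w θ = quadDisc (thetaCoeffs ![u, v, w] θ) := rfl

end ThetaC

lemma IsRootSystem.exists_thetaCoeffs_eq_smul {d : ℕ} {Φ : Finset (Fin d → ℝ)}
    (hRS : IsRootSystem Φ) {x : Fin 3 → Fin d → ℂ}
    (hdisc : ∀ θ ∈ Φ, quadDisc (thetaCoeffs x θ) = 0) {a b : Fin d → ℝ} (ha : a ∈ Φ) (hb : b ∈ Φ)
    (hab : dotR a b ≠ 0) (hxa : thetaCoeffs x a ≠ 0) :
    ∃ m : ℂ, thetaCoeffs x b = m • thetaCoeffs x a := by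
  obtain ⟨c, hc, hmem⟩ := hRS.exists_sub_smul_mem ha hb hab
  have hreflect := hdisc _ hmem
  rw [thetaCoeffs_sub_smul, quadDisc_sub_smul, hdisc a ha, hdisc b hb] at hreflect
  have hpolar : quadDiscPolar (thetaCoeffs x a) (thetaCoeffs x b) = 0 := by
    simpa [hc] using hreflect
  exact exists_eq_smul_of_quadDisc_eq_zero hxa (hdisc a ha) (hdisc b hb) hpolar

lemma IsIrreducibleRS.exists_quadDisc_thetaCoeffs_ne_zero {d : ℕ} {Φ : Finset (Fin d → ℝ)}
    (hirr : IsIrreducibleRS Φ) (hRS : IsRootSystem Φ) {x : Fin 3 → Fin d → ℂ}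
    (hli : LinearIndependent ℂ x) (hx : ∀ θ ∈ Φ, thetaCoeffs x θ ≠ 0) :
    ∃ θ ∈ Φ, quadDisc (thetaCoeffs x θ) ≠ 0 := by
  by_contra! hdisc
  obtain ⟨α, hα⟩ : Φ.Nonempty := by
    by_contra! hΦ
    exact hli.ne_zero 0 (eq_zero_of_forall_thetaC_eq_zero hRS.2.1 (by simp [hΦ]))
  have hprop : ∀ θ ∈ Φ, ∃ l : ℂ, thetaCoeffs x θ = l • thetaCoeffs x α := by
    refine hirr.induction_on hα ⟨1, (one_smul ℂ _).symm⟩ fun a ha b hb ⟨l, hl⟩ hab => ?_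
    obtain ⟨m, hm⟩ := hRS.exists_thetaCoeffs_eq_smul hdisc ha hb hab (hx a ha)
    exact ⟨m * l, by rw [hm, hl, smul_smul]⟩
  obtain ⟨n, hn, hnα⟩ := exists_ne_zero_dotProduct_eq_zero (thetaCoeffs x α)
  have hcomb : ∑ i, n i • x i = 0 := by
    refine eq_zero_of_forall_thetaC_eq_zero hRS.2.1 fun θ hθ => ?_
    obtain ⟨l, hl⟩ := hprop θ hθ
    rw [thetaC_sum_smul, hl, dotProduct_smul, hnα, smul_zero]
  exact hn (funext (Fintype.linearIndependent_iff.mp hli n hcomb))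

theorem stmt15_general {d : ℕ} (Φ : Finset (Fin d → ℝ))
    (hRS : IsRootSystem Φ) (hirr : IsIrreducibleRS Φ)
    (u v w : Fin d → ℂ) (hli : LinearIndependent ℂ ![u, v, w])
    (hnz : ∀ θ ∈ Φ, ¬ (thetaC θ u = 0 ∧ thetaC θ v = 0 ∧ thetaC θ w = 0)) :
    ∃ θ ∈ Φ, discQ u v w θ ≠ 0 := by
  simp only [discQ_eq_quadDisc]
  exact hirr.exists_quadDisc_thetaCoeffs_ne_zero hRS hli fun θ hθ hzero =>
    hnz θ hθ ⟨congrFun hzero 0, congrFun hzero 1, congrFun hzero 2⟩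

/-- If `Φ` is reduced irreducible of rank `d ≥ 2` and `u, v, w ∈ ℂ^d` are
linearly independent with `(θ_ℂ(u), θ_ℂ(v), θ_ℂ(w)) ≠ 0` for every root `θ`, then some root
`θ ∈ Φ` has `disc(q_θ) = θ_ℂ(v)² − 4·θ_ℂ(u)·θ_ℂ(w) ≠ 0`. -/
theorem stmt15 {d : ℕ} (hd : 2 ≤ d) (Φ : Finset (Fin d → ℝ))
    (hRS : IsRootSystem Φ) (hred : IsReducedRS Φ) (hirr : IsIrreducibleRS Φ)
    (u v w : Fin d → ℂ) (hli : LinearIndependent ℂ ![u, v, w])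
    (hnz : ∀ θ ∈ Φ, ¬ (thetaC θ u = 0 ∧ thetaC θ v = 0 ∧ thetaC θ w = 0)) :
    ∃ θ ∈ Φ, discQ u v w θ ≠ 0 :=
  stmt15_general Φ hRS hirr u v w hli hnz

end
end
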